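/- Let n ≥ 0 and 1 ≤ k ≤ n+1. Then H_+^{0:n} ⊆ F_+^{k:n}(I). More precisely, if h ∈ H_+^{0:n}, say h = h_{0;μ} with all h_{j;μ} finite, then h ∈ L^n with generalized derivatives h^{(j)} = h_{j;μ}/w_j for j ∈ {0, …, n}, and each h^{(j)} is nonnegative and nondecreasing on I; in particular h ∈ F_+^{1:n}(I). -/

import Mathlib

open MeasureTheory Set Filter
open scoped ENNReal

noncomputable section

/-- `g` is right-continuous at every point of `I` that is not the greatest point of `I`,
and left-continuous at the greatest point of `I` when the latter exists (the class `LD`). -/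
def IsLD (I : Set ℝ) (g : ℝ → ℝ) : Prop :=
  (∀ x ∈ I, (∃ y ∈ I, x < y) → Tendsto g (nhdsWithin x (I ∩ Ioi x)) (nhds (g x))) ∧
  (∀ x ∈ I, (∀ y ∈ I, y ≤ x) → Tendsto g (nhdsWithin x (I ∩ Iio x)) (nhds (g x)))

/-- `d 0, …, d n` is the system of generalized derivatives of `f` on `I` with respect to the
gauge sequence `w`; i.e., `f ∈ L^n` with `f^{(j)} = d j` for `j = 0, …, n`. -/
structure IsGenL (I : Set ℝ) (w : ℕ → ℝ → ℝ) (n : ℕ) (f : ℝ → ℝ) (d : ℕ → ℝ → ℝ) : Prop where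
  base : ∀ x ∈ I, f x = d 0 x * w 0 x
  ld : IsLD I (d n)
  integrable : ∀ j < n, ∀ z ∈ I, ∀ x ∈ I,
    IntervalIntegrable (fun u => d (j + 1) u * w (j + 1) u) volume z x
  deriv_eq : ∀ j < n, ∀ z ∈ I, ∀ x ∈ I,
    d j x = d j z + ∫ u in z..x, d (j + 1) u * w (j + 1) u

/-- `f ∈ F_+^{k:n}(I)` (with derivative system `d`): all the generalized derivatives
`f^{(j)} = d j` of orders `j = k-1, …, n` are nondecreasing on `I`. -/
def MemF (I : Set ℝ) (w : ℕ → ℝ → ℝ) (k n : ℕ) (f : ℝ → ℝ) (d : ℕ → ℝ → ℝ) : Prop :=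
  IsGenL I w n f d ∧ ∀ j, k - 1 ≤ j → j ≤ n → MonotoneOn (d j) I

/-- `w` is a sequence of positive, Borel-measurable, locally bounded gauge functions on `I`. -/
def IsGauge (I : Set ℝ) (w : ℕ → ℝ → ℝ) : Prop :=
  ∀ j, (∀ x ∈ I, 0 < w j x) ∧ Measurable (fun x : I => w j x) ∧
    ∀ K ⊆ I, IsCompact K → ∃ C, ∀ x ∈ K, |w j x| ≤ C

def pAux (w : ℕ → ℝ → ℝ) (t : ℝ) (m : ℕ) : ℕ → ℝ → ℝ
  | 0 => w m
  | (i + 1) => fun x => w (m - (i + 1)) x * ∫ u in t..x, pAux w t m i u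

/-- The `w`-polynomial `p_{t;j,m}` (for `t ∈ I`). -/
def pfun (w : ℕ → ℝ → ℝ) (t : ℝ) (j m : ℕ) : ℝ → ℝ := pAux w t m (m - j)

/-- The "positive part" `p^+_{t;j,m}`. -/
def pplus (w : ℕ → ℝ → ℝ) (t : ℝ) (j m : ℕ) : ℝ → ℝ := fun x =>
  if t ≤ x then pfun w t j m x else 0

def pAuxE (w : ℕ → ℝ → ℝ) (I : Set ℝ) (m : ℕ) : ℕ → ℝ → ℝ≥0∞
  | 0 => fun x => ENNReal.ofReal (w m x)
  | (i + 1) => fun x =>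
      ENNReal.ofReal (w (m - (i + 1)) x) * ∫⁻ u in I ∩ Iio x, pAuxE w I m i u

/-- `p_{a;j,m} : I → [0, ∞]`, where `a` is the left endpoint of `I` (the integrals from `a`
are taken over `(a, x) ∩ I = I ∩ Iio x`). -/
def pE (w : ℕ → ℝ → ℝ) (I : Set ℝ) (j m : ℕ) : ℝ → ℝ≥0∞ := pAuxE w I m (m - j)

/-- The filter of `x ↓ a` within `I`, `a` being the left endpoint of `I`. -/
def leftEndFilter (I : Set ℝ) : Filter ℝ := ⨅ c ∈ I, Filter.principal (I ∩ Iic c)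

/-- `ν(f) = ∫_I f dν ∈ [−∞, ∞]`. -/
def nuEval (ν : Measure ℝ) (I : Set ℝ) (f : ℝ → ℝ) : EReal :=
  ((∫⁻ x in I, ENNReal.ofReal (f x) ∂ν : ℝ≥0∞) : EReal)
    - ((∫⁻ x in I, ENNReal.ofReal (-f x) ∂ν : ℝ≥0∞) : EReal)

/-- The expectation `E g ∈ [−∞, ∞]` (in the extended sense). -/
def eval' {α : Type*} [MeasurableSpace α] (P : Measure α) (g : α → ℝ) : EReal :=
  ((∫⁻ a, ENNReal.ofReal (g a) ∂P : ℝ≥0∞) : EReal)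
    - ((∫⁻ a, ENNReal.ofReal (-g a) ∂P : ℝ≥0∞) : EReal)

/-!
Write `A_j(x) = ∫_I p⁺_{t;j,n}(x) μ(dt)`. Since `p⁺_{t;n,n}(x) = w_n(x) 1_{t ≤ x}` and
`p⁺_{t;j,n}(x) = w_j(x) ∫_{-∞}^x p⁺_{t;j+1,n}(u) du` for `j < n`, Tonelli's theorem gives
`A_n = w_n · μ(I ∩ (-∞, x])` and `A_j = w_j · ∫_{-∞}^x A_{j+1}`. So `A_n / w_n` is the distribution
function of `μ` restricted to `I`, which is right-continuous, and left-continuous at a largest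
point of `I` because `μ` has no atom there; and each `A_j / w_j` is a nondecreasing primitive of
`A_{j+1} = (A_{j+1} / w_{j+1}) · w_{j+1}`. Tonelli applies because the finiteness of `A_n(x)` makes
`μ` finite on `I ∩ (-∞, x]`, and local boundedness of the gauges keeps the inner integrals finite.
-/

open Topology

section Polynomials

variable {w W : ℕ → ℝ → ℝ} {t x : ℝ} {j m n : ℕ}

lemma pfun_self : pfun w t n n = w n := by
  simp [pfun, pAux]

lemma pfun_of_lt (hj : j < n) :
    pfun w t j n x = w j x * ∫ u in t..x, pfun w t (j + 1) n u := by
  rw [pfun, show n - j = n - (j + 1) + 1 by omega, pAux, show n - (n - (j + 1) + 1) = j by omega]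
  rfl

lemma pplus_self : pplus w t n n x = if t ≤ x then w n x else 0 := by
  simp only [pplus, pfun_self]

lemma pplus_eq_zero_of_lt (h : x < t) : pplus w t j n x = 0 :=
  if_neg h.not_ge

lemma pplus_eq_mul_intervalIntegral (hj : j < n) (htx : t ≤ x) :
    pplus w t j n x = w j x * ∫ u in t..x, pplus w t (j + 1) n u := by
  rw [pplus, if_pos htx, pfun_of_lt hj]
  congr 1
  refine intervalIntegral.integral_congr fun u hu => ?_
  rw [uIcc_of_le htx] at hu
  exact (if_pos hu.1).symm

lemma pAux_congr (h : ∀ i, EqOn (w i) (W i) (Icc t x)) (htx : t ≤ x) (i : ℕ) :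
    pAux w t m i x = pAux W t m i x := by
  induction i generalizing x with
  | zero => exact h m ⟨htx, le_rfl⟩
  | succ i ih =>
    simp only [pAux]
    rw [h _ ⟨htx, le_rfl⟩]
    congr 1
    refine intervalIntegral.integral_congr fun u hu => ?_
    rw [uIcc_of_le htx] at hu
    exact ih (fun k => (h k).mono (Icc_subset_Icc_right hu.2)) hu.1

lemma pplus_congr (h : ∀ i, EqOn (w i) (W i) (Icc t x)) : pplus w t j n x = pplus W t j n x := by
  unfold pplus pfun
  split_ifs with htx
  exacts [pAux_congr h htx _, rfl]

end Polynomials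

lemma measurable_setLIntegral_Ioc_uncurry {g : ℝ × ℝ → ℝ≥0∞} (hg : Measurable g) :
    Measurable fun q : ℝ × ℝ => ∫⁻ u in Ioc q.1 q.2, g (q.1, u) := by
  have hS : MeasurableSet {p : (ℝ × ℝ) × ℝ | p.1.1 < p.2 ∧ p.2 ≤ p.1.2} :=
    (measurableSet_lt measurable_fst.fst measurable_snd).inter
      (measurableSet_le measurable_snd measurable_fst.snd)
  simp_rw [← lintegral_indicator measurableSet_Ioc]
  exact ((hg.comp (measurable_fst.fst.prodMk measurable_snd)).indicator hS).lintegral_prod_right'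

lemma setLIntegral_Iic_eq_Ioc {f : ℝ → ℝ≥0∞} {t x : ℝ} (hf : ∀ u < t, f u = 0) (htx : t ≤ x) :
    ∫⁻ u in Iic x, f u = ∫⁻ u in Ioc t x, f u := by
  have hzero : ∫⁻ u in Iic t, f u = 0 := by
    rw [← setLIntegral_congr Iio_ae_eq_Iic, setLIntegral_congr_fun measurableSet_Iio hf,
      lintegral_zero]
  rw [← Iic_union_Ioc_eq_Iic htx, lintegral_union measurableSet_Ioc
    (Iic_disjoint_Ioc le_rfl), hzero, zero_add]

section NonnegGauge

variable {W : ℕ → ℝ → ℝ} (hW0 : ∀ i x, 0 ≤ W i x) {t x : ℝ} {j m n : ℕ}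
include hW0

lemma pAux_nonneg (i : ℕ) (htx : t ≤ x) : 0 ≤ pAux W t m i x := by
  induction i generalizing x with
  | zero => exact hW0 m x
  | succ i ih =>
    exact mul_nonneg (hW0 _ x) (intervalIntegral.integral_nonneg htx fun u hu => ih hu.1)

lemma pplus_nonneg : 0 ≤ pplus W t j n x := by
  unfold pplus pfun
  split_ifs with htx
  exacts [pAux_nonneg hW0 _ htx, le_rfl]

lemma pplus_eq_mul_toReal_lintegral (hm : Measurable (pplus W t (j + 1) n)) (hj : j < n)
    (htx : t ≤ x) :
    pplus W t j n x = W j x * (∫⁻ u in Ioc t x, ENNReal.ofReal (pplus W t (j + 1) n u)).toReal := by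
  rw [pplus_eq_mul_intervalIntegral hj htx, intervalIntegral.integral_of_le htx,
    integral_eq_lintegral_of_nonneg_ae (ae_of_all _ fun u => pplus_nonneg hW0)
      hm.aestronglyMeasurable]

lemma measurable_pplus_uncurry (hWm : ∀ i, Measurable (W i)) (hj : j ≤ n) :
    Measurable fun q : ℝ × ℝ => pplus W q.1 j n q.2 := by
  induction hj using Nat.decreasingInduction with
  | self =>
    simp only [pplus_self]
    exact Measurable.ite (measurableSet_le measurable_fst measurable_snd)
      ((hWm n).comp measurable_snd) measurable_const
  | of_succ k hk ih =>
    have hrepr : (fun q : ℝ × ℝ => pplus W q.1 k n q.2) = fun q => if q.1 ≤ q.2 then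
        W k q.2 * (∫⁻ u in Ioc q.1 q.2, ENNReal.ofReal (pplus W q.1 (k + 1) n u)).toReal
        else 0 := by
      funext q
      split_ifs with hq
      · exact pplus_eq_mul_toReal_lintegral hW0
          (ih.comp (measurable_const.prodMk measurable_id)) hk hq
      · exact pplus_eq_zero_of_lt (not_le.1 hq)
    rw [hrepr]
    exact Measurable.ite (measurableSet_le measurable_fst measurable_snd)
      (((hWm k).comp measurable_snd).mul
        (measurable_setLIntegral_Ioc_uncurry ih.ennreal_ofReal).ennreal_toReal) measurable_const

lemma bddAbove_pplus_image_Icc {d : ℝ} (hWb : ∀ i, BddAbove (W i '' Icc t d)) (hj : j ≤ n) :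
    BddAbove (pplus W t j n '' Icc t d) := by
  induction hj using Nat.decreasingInduction with
  | self =>
    refine (hWb n).mono ?_
    rintro _ ⟨u, hu, rfl⟩
    exact ⟨u, hu, by rw [pplus_self, if_pos hu.1]⟩
  | of_succ k hk ih =>
    obtain ⟨CW, hCW⟩ := hWb k
    obtain ⟨C, hC⟩ := ih
    refine ⟨max CW 0 * (max C 0 * (d - t)), ?_⟩
    rintro _ ⟨u, hu, rfl⟩
    have hint : ∫ v in t..u, pplus W t (k + 1) n v ≤ max C 0 * (d - t) := by
      refine (Real.le_norm_self _).trans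
        ((intervalIntegral.norm_integral_le_of_norm_le_const (C := max C 0)
          fun v hv => ?_).trans ?_)
      · rw [uIoc_of_le hu.1] at hv
        rw [Real.norm_of_nonneg (pplus_nonneg hW0)]
        exact (hC ⟨v, ⟨hv.1.le, hv.2.trans hu.2⟩, rfl⟩).trans (le_max_left _ _)
      · rw [abs_of_nonneg (sub_nonneg.2 hu.1)]
        exact mul_le_mul_of_nonneg_left (by linarith [hu.2]) (le_max_right _ _)
    rw [pplus_eq_mul_intervalIntegral hk hu.1]
    exact mul_le_mul ((hCW ⟨u, hu, rfl⟩).trans (le_max_left _ _)) hint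
      (intervalIntegral.integral_nonneg hu.1 fun v _ => pplus_nonneg hW0) (le_max_right _ _)

lemma ofReal_pplus_eq_mul_lintegral_Iic (hWm : ∀ i, Measurable (W i))
    (hWb : ∀ i, BddAbove (W i '' Icc t x)) (hj : j < n) :
    ENNReal.ofReal (pplus W t j n x)
      = ENNReal.ofReal (W j x) * ∫⁻ u in Iic x, ENNReal.ofReal (pplus W t (j + 1) n u) := by
  rcases le_or_gt t x with htx | hxt
  · have hfin : ∫⁻ u in Ioc t x, ENNReal.ofReal (pplus W t (j + 1) n u) ≠ ⊤ := by
      obtain ⟨C, hC⟩ := bddAbove_pplus_image_Icc hW0 hWb hj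
      exact (setLIntegral_lt_top_of_le_nnreal measure_Ioc_lt_top.ne ⟨C.toNNReal, fun u hu =>
        ENNReal.ofReal_le_ofReal (hC ⟨u, Ioc_subset_Icc_self hu, rfl⟩)⟩).ne
    rw [pplus_eq_mul_toReal_lintegral hW0 ((measurable_pplus_uncurry hW0 hWm hj).comp
        (measurable_const.prodMk measurable_id)) hj htx, ENNReal.ofReal_mul (hW0 j x),
      ENNReal.ofReal_toReal hfin, setLIntegral_Iic_eq_Ioc
        (fun u hu => by rw [pplus_eq_zero_of_lt hu, ENNReal.ofReal_zero]) htx]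
  · rw [pplus_eq_zero_of_lt hxt, setLIntegral_eq_zero measurableSet_Iic fun u hu => by
      rw [pplus_eq_zero_of_lt (hu.trans_lt hxt), ENNReal.ofReal_zero, Pi.zero_apply]]
    simp

end NonnegGauge

section Measure

variable {ν : Measure ℝ} {x : ℝ}

lemma lintegral_ofReal_pplus_self (w : ℕ → ℝ → ℝ) (n : ℕ) :
    ∫⁻ t, ENNReal.ofReal (pplus w t n n x) ∂ν = ENNReal.ofReal (w n x) * ν (Iic x) := by
  have hpt : (fun t => ENNReal.ofReal (pplus w t n n x))
      = (Iic x).indicator fun _ => ENNReal.ofReal (w n x) := by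
    funext t
    by_cases ht : t ≤ x <;> simp [pplus_self, ht]
  rw [hpt, lintegral_indicator_const measurableSet_Iic]

lemma lintegral_lintegral_Iic_swap {K : ℝ → ℝ → ℝ≥0∞} (hK : Measurable (Function.uncurry K))
    (hK0 : ∀ t u, u < t → K t u = 0) (hν : ν (Iic x) ≠ ⊤) :
    ∫⁻ t, (∫⁻ u in Iic x, K t u) ∂ν = ∫⁻ u in Iic x, ∫⁻ t, K t u ∂ν := by
  have : IsFiniteMeasure (ν.restrict (Iic x)) := isFiniteMeasure_restrict.2 hν
  have hsupp : ∀ {y : ℝ}, Function.support (fun t => K t y) ⊆ Iic y := fun {y} t ht =>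
    not_lt.1 fun hyt => ht (hK0 t y hyt)
  calc ∫⁻ t, (∫⁻ u in Iic x, K t u) ∂ν = ∫⁻ t in Iic x, (∫⁻ u in Iic x, K t u) ∂ν := by
        refine (setLIntegral_eq_of_support_subset fun t ht => mem_Iic.2 <|
          not_lt.1 fun hxt => ht ?_).symm
        exact setLIntegral_eq_zero measurableSet_Iic fun u hu => hK0 t u (hu.trans_lt hxt)
    _ = ∫⁻ u in Iic x, ∫⁻ t in Iic x, K t u ∂ν := lintegral_lintegral_swap hK.aemeasurable
    _ = ∫⁻ u in Iic x, ∫⁻ t, K t u ∂ν := setLIntegral_congr_fun measurableSet_Iic fun u hu =>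
        setLIntegral_eq_of_support_subset (hsupp.trans (Iic_subset_Iic.2 hu))

lemma tendsto_measure_Iic_nhdsGT {y : ℝ} (hxy : x < y) (hy : ν (Iic y) ≠ ⊤) :
    Tendsto (fun u => ν (Iic u)) (𝓝[>] x) (𝓝 (ν (Iic x))) := by
  have h := tendsto_measure_biInter_gt (μ := ν) (s := Iic) (a := x)
    (fun r _ => measurableSet_Iic.nullMeasurableSet)
    (fun _ _ _ hij => Iic_subset_Iic.2 hij) ⟨y, hxy, hy⟩
  have hInter : ⋂ r > x, Iic r = Iic x := by
    ext u
    simp only [mem_iInter, mem_Iic]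
    exact forall_gt_imp_ge_iff_le_of_dense
  rwa [hInter] at h

lemma tendsto_measure_Iic_nhdsLT : Tendsto (fun u => ν (Iic u)) (𝓝[<] x) (𝓝 (ν (Iio x))) := by
  have : (atTop : Filter (Iio x)).IsCountablyGenerated := by
    rw [← comap_coe_Iio_nhdsLT x]
    infer_instance
  have hUnion : ⋃ u : Iio x, Iic (u : ℝ) = Iio x := by
    ext u
    simp only [mem_iUnion, mem_Iic, Subtype.exists, mem_Iio, exists_prop]
    exact ⟨fun ⟨v, hv, huv⟩ => huv.trans_lt hv, fun hu => ⟨u, hu, le_rfl⟩⟩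
  have h := tendsto_measure_iUnion_atTop (μ := ν) (s := fun u : Iio x => Iic (u : ℝ))
    fun _ _ h => Iic_subset_Iic.2 h
  rw [hUnion] at h
  rwa [← map_coe_Iio_atTop x, tendsto_map'_iff]

end Measure

section Gauge

variable {I : Set ℝ} {w : ℕ → ℝ → ℝ}

lemma IsGauge.bddAbove_image_Icc (hw : IsGauge I w) {a b : ℝ} (h : Icc a b ⊆ I) (j : ℕ) :
    BddAbove (w j '' Icc a b) := by
  obtain ⟨C, hC⟩ := (hw j).2.2 (Icc a b) h isCompact_Icc
  exact ⟨C, by rintro _ ⟨u, hu, rfl⟩; exact (le_abs_self _).trans (hC u hu)⟩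

lemma IsGauge.exists_measurable_extension (hw : IsGauge I w) (hI : MeasurableSet I) :
    ∃ W : ℕ → ℝ → ℝ, (∀ j, Measurable (W j)) ∧ (∀ j x, 0 ≤ W j x) ∧ ∀ j, EqOn (w j) (W j) I := by
  classical
  refine ⟨fun j x => if x ∈ I then w j x else 0,
    fun j => Measurable.dite (f := fun y : I => w j y) (hw j).2.1 measurable_const hI,
    fun j x => ?_, fun j x hx => (if_pos hx).symm⟩
  dsimp only
  split_ifs with hx
  exacts [((hw j).1 x hx).le, le_rfl]

lemma lintegral_pplus_eq_mul_lintegral_Iic (hI : I.OrdConnected) (hw : IsGauge I w)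
    {μ : Measure ℝ} {j n : ℕ} {x : ℝ} (hj : j < n) (hx : x ∈ I) (hμ : μ.restrict I (Iic x) ≠ ⊤) :
    ∫⁻ t in I, ENNReal.ofReal (pplus w t j n x) ∂μ = ENNReal.ofReal (w j x) *
      ∫⁻ u in Iic x, ∫⁻ t in I, ENNReal.ofReal (pplus w t (j + 1) n u) ∂μ := by
  obtain ⟨W, hWm, hW0, hwW⟩ := hw.exists_measurable_extension hI.measurableSet
  have hIcc : ∀ {t u}, t ∈ I → u ≤ x → Icc t u ⊆ I := fun ht hu =>
    (Icc_subset_Icc_right hu).trans (hI.out ht hx)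
  have hcongr : ∀ {t u} (i : ℕ), t ∈ I → u ≤ x → pplus w t i n u = pplus W t i n u :=
    fun i ht hu => pplus_congr fun k => (hwW k).mono (hIcc ht hu)
  calc ∫⁻ t in I, ENNReal.ofReal (pplus w t j n x) ∂μ
      = ∫⁻ t in I, ENNReal.ofReal (W j x) *
          (∫⁻ u in Iic x, ENNReal.ofReal (pplus W t (j + 1) n u)) ∂μ := by
        refine setLIntegral_congr_fun hI.measurableSet fun t ht => ?_
        rw [hcongr j ht le_rfl, ofReal_pplus_eq_mul_lintegral_Iic hW0 hWm (fun k => ?_) hj]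
        rw [← ((hwW k).mono (hIcc ht le_rfl)).image_eq]
        exact hw.bddAbove_image_Icc (hIcc ht le_rfl) k
    _ = ENNReal.ofReal (w j x) *
          ∫⁻ u in Iic x, ∫⁻ t in I, ENNReal.ofReal (pplus W t (j + 1) n u) ∂μ := by
        rw [lintegral_const_mul' _ _ ENNReal.ofReal_ne_top, hwW j hx,
          lintegral_lintegral_Iic_swap
          (K := fun t u => ENNReal.ofReal (pplus W t (j + 1) n u))
          (measurable_pplus_uncurry hW0 hWm hj).ennreal_ofReal (fun t u hut => ?_) hμ]
        rw [pplus_eq_zero_of_lt hut, ENNReal.ofReal_zero]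
    _ = _ := by
        refine congrArg _ (setLIntegral_congr_fun measurableSet_Iic fun u hu => ?_)
        exact setLIntegral_congr_fun hI.measurableSet fun t ht => by rw [hcongr _ ht hu]

end Gauge

lemma intervalIntegrable_toReal_of_lintegral_ne_top {F : ℝ → ℝ≥0∞} {z x : ℝ} (hzx : z ≤ x)
    (hF : AEMeasurable F (volume.restrict (Ioc z x))) (hfin : ∫⁻ u in Ioc z x, F u ≠ ⊤) :
    IntervalIntegrable (fun u => (F u).toReal) volume z x :=
  (intervalIntegrable_iff_integrableOn_Ioc_of_le hzx).2
    (integrable_toReal_of_lintegral_ne_top hF hfin)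

lemma toReal_lintegral_Iic_eq_add_integral {F : ℝ → ℝ≥0∞} {z x : ℝ} (hzx : z ≤ x)
    (hF : AEMeasurable F (volume.restrict (Ioc z x))) (hfin : ∫⁻ u in Iic x, F u ≠ ⊤) :
    (∫⁻ u in Iic x, F u).toReal = (∫⁻ u in Iic z, F u).toReal + ∫ u in z..x, (F u).toReal := by
  have hsplit : ∫⁻ u in Iic x, F u = (∫⁻ u in Iic z, F u) + ∫⁻ u in Ioc z x, F u := by
    rw [← lintegral_union measurableSet_Ioc (Iic_disjoint_Ioc le_rfl), Iic_union_Ioc_eq_Iic hzx]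
  rw [hsplit] at hfin ⊢
  obtain ⟨hfin_z, hfin_zx⟩ := ENNReal.add_ne_top.1 hfin
  rw [ENNReal.toReal_add hfin_z hfin_zx, intervalIntegral.integral_of_le hzx,
    integral_toReal hF (ae_lt_top' hF hfin_zx)]

lemma IsLD.congr {I : Set ℝ} {g g' : ℝ → ℝ} (h : IsLD I g) (hg : EqOn g g' I) : IsLD I g' := by
  have hev : ∀ {x} {s : Set ℝ}, s ⊆ I → g =ᶠ[𝓝[s] x] g' := fun hs =>
    eventuallyEq_of_mem self_mem_nhdsWithin fun u hu => hg (hs hu)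
  refine ⟨fun x hx hlt => ?_, fun x hx hmax => ?_⟩
  · rw [← hg hx]
    exact (h.1 x hx hlt).congr' (hev inter_subset_left)
  · rw [← hg hx]
    exact (h.2 x hx hmax).congr' (hev inter_subset_left)

lemma isLD_toReal_measure_Iic {I : Set ℝ} {ν : Measure ℝ} (hfin : ∀ x ∈ I, ν (Iic x) ≠ ⊤)
    (hmax : ∀ x ∈ I, (∀ y ∈ I, y ≤ x) → ν {x} = 0) : IsLD I fun x => (ν (Iic x)).toReal := by
  refine ⟨fun x hx ⟨y, hy, hxy⟩ => ?_, fun x hx hx_max => ?_⟩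
  · exact ((ENNReal.tendsto_toReal (hfin x hx)).comp
      (tendsto_measure_Iic_nhdsGT hxy (hfin y hy))).mono_left
      (nhdsWithin_mono _ inter_subset_right)
  · have hIio : ν (Iio x) = ν (Iic x) := measure_congr (Iio_ae_eq_Iic' (hmax x hx hx_max))
    refine ((ENNReal.tendsto_toReal (hfin x hx)).comp ?_).mono_left
      (nhdsWithin_mono _ inter_subset_right)
    rw [← hIio]
    exact tendsto_measure_Iic_nhdsLT

/-- With `A j = h_{j;μ}` and `ν = μ|_I`, this is the generalized derivative
`h^{(j)} = h_{j;μ} / w_j` in the form in which Tonelli's theorem produces it. -/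
def cdfTower (ν : Measure ℝ) (A : ℕ → ℝ → ℝ≥0∞) (n j : ℕ) (x : ℝ) : ℝ≥0∞ :=
  if j < n then ∫⁻ u in Iic x, A (j + 1) u else ν (Iic x)

section CdfTower

variable {I : Set ℝ} {w : ℕ → ℝ → ℝ} {ν : Measure ℝ} {A : ℕ → ℝ → ℝ≥0∞} {n j : ℕ}

lemma cdfTower_of_lt (hj : j < n) (x : ℝ) : cdfTower ν A n j x = ∫⁻ u in Iic x, A (j + 1) u :=
  if_pos hj

lemma cdfTower_self (x : ℝ) : cdfTower ν A n n x = ν (Iic x) :=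
  if_neg (lt_irrefl n)

lemma monotone_cdfTower : Monotone (cdfTower ν A n j) := fun x y hxy => by
  unfold cdfTower
  split_ifs
  exacts [lintegral_mono_set (Iic_subset_Iic.2 hxy), measure_mono (Iic_subset_Iic.2 hxy)]

variable (hw : ∀ j, ∀ x ∈ I, 0 < w j x)
  (hA : ∀ j ≤ n, ∀ x ∈ I, A j x = ENNReal.ofReal (w j x) * cdfTower ν A n j x)
include hw hA

lemma toReal_div_eq_toReal_cdfTower (hj : j ≤ n) {x : ℝ} (hx : x ∈ I) :
    (A j x).toReal / w j x = (cdfTower ν A n j x).toReal := by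
  rw [hA j hj x hx, ENNReal.toReal_mul, ENNReal.toReal_ofReal (hw j x hx).le,
    mul_div_cancel_left₀ _ (hw j x hx).ne']

variable (hfin : ∀ j ≤ n, ∀ x ∈ I, A j x ≠ ⊤)
include hfin

lemma cdfTower_ne_top (hj : j ≤ n) {x : ℝ} (hx : x ∈ I) : cdfTower ν A n j x ≠ ⊤ := by
  intro htop
  apply hfin j hj x hx
  rw [hA j hj x hx, htop, ENNReal.mul_top (ENNReal.ofReal_pos.2 (hw j x hx)).ne']

lemma monotoneOn_toReal_div (hj : j ≤ n) : MonotoneOn (fun x => (A j x).toReal / w j x) I :=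
  fun x hx y hy hxy => by
    simp only [toReal_div_eq_toReal_cdfTower hw hA hj hx,
      toReal_div_eq_toReal_cdfTower hw hA hj hy]
    exact ENNReal.toReal_mono (cdfTower_ne_top hw hA hfin hj hy) (monotone_cdfTower hxy)

lemma toReal_div_eq_add_integral (hI : I.OrdConnected)
    (hwm : ∀ j, AEMeasurable (w j) (volume.restrict I)) (hj : j < n) {z x : ℝ} (hz : z ∈ I)
    (hx : x ∈ I) (hzx : z ≤ x) :
    IntervalIntegrable (fun u => (A (j + 1) u).toReal / w (j + 1) u * w (j + 1) u) volume z x ∧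
      (A j x).toReal / w j x = (A j z).toReal / w j z +
        ∫ u in z..x, (A (j + 1) u).toReal / w (j + 1) u * w (j + 1) u := by
  have hsub : Ioc z x ⊆ I := Ioc_subset_Icc_self.trans (hI.out hz hx)
  have hcancel : EqOn (fun u => (A (j + 1) u).toReal / w (j + 1) u * w (j + 1) u)
      (fun u => (A (j + 1) u).toReal) (uIcc z x) := fun u hu =>
    div_mul_cancel₀ _ (hw (j + 1) u (hI.out hz hx (by rwa [uIcc_of_le hzx] at hu))).ne'
  have hmeas : AEMeasurable (A (j + 1)) (volume.restrict (Ioc z x)) := by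
    refine (((hwm (j + 1)).mono_measure (Measure.restrict_mono hsub le_rfl)).ennreal_ofReal.mul
      (monotone_cdfTower (ν := ν) (A := A) (n := n) (j := j + 1)).measurable.aemeasurable).congr ?_
    exact ae_restrict_of_forall_mem measurableSet_Ioc fun u hu => (hA (j + 1) hj u (hsub hu)).symm
  have hfin_x : ∫⁻ u in Iic x, A (j + 1) u ≠ ⊤ := by
    rw [← cdfTower_of_lt hj]
    exact cdfTower_ne_top hw hA hfin hj.le hx
  constructor
  · refine (intervalIntegrable_toReal_of_lintegral_ne_top hzx hmeas
      (ne_top_of_le_ne_top hfin_x (lintegral_mono_set Ioc_subset_Iic_self))).congr ?_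
    exact (hcancel.mono uIoc_subset_uIcc).symm
  · rw [intervalIntegral.integral_congr hcancel, toReal_div_eq_toReal_cdfTower hw hA hj.le hx,
      toReal_div_eq_toReal_cdfTower hw hA hj.le hz, cdfTower_of_lt hj, cdfTower_of_lt hj]
    exact toReal_lintegral_Iic_eq_add_integral hzx hmeas hfin_x

end CdfTower

lemma lintegral_pplus_eq_mul_cdfTower {I : Set ℝ} {w : ℕ → ℝ → ℝ} (hI : I.OrdConnected)
    (hw : IsGauge I w) {μ : Measure ℝ} {j n : ℕ} {x : ℝ} (hj : j ≤ n) (hx : x ∈ I)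
    (hμ : μ.restrict I (Iic x) ≠ ⊤) :
    ∫⁻ t in I, ENNReal.ofReal (pplus w t j n x) ∂μ = ENNReal.ofReal (w j x) * cdfTower
      (μ.restrict I) (fun i y => ∫⁻ t in I, ENNReal.ofReal (pplus w t i n y) ∂μ) n j x := by
  rcases hj.lt_or_eq with hj | rfl
  · rw [cdfTower_of_lt hj]
    exact lintegral_pplus_eq_mul_lintegral_Iic hI hw hj hx hμ
  · rw [cdfTower_self]
    exact lintegral_ofReal_pplus_self w j

theorem isGenL_of_eq_mul_cdfTower {I : Set ℝ} {w : ℕ → ℝ → ℝ} {ν : Measure ℝ}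
    {A : ℕ → ℝ → ℝ≥0∞} {n : ℕ} {f : ℝ → ℝ} (hI : I.OrdConnected)
    (hwm : ∀ j, AEMeasurable (w j) (volume.restrict I)) (hw : ∀ j, ∀ x ∈ I, 0 < w j x)
    (hA : ∀ j ≤ n, ∀ x ∈ I, A j x = ENNReal.ofReal (w j x) * cdfTower ν A n j x)
    (hfin : ∀ j ≤ n, ∀ x ∈ I, A j x ≠ ⊤) (hmax : ∀ x ∈ I, (∀ y ∈ I, y ≤ x) → ν {x} = 0)
    (hf : ∀ x ∈ I, f x = (A 0 x).toReal) :
    IsGenL I w n f fun j x => (A j x).toReal / w j x where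
  base x hx := by rw [hf x hx, div_mul_cancel₀ _ (hw 0 x hx).ne']
  ld := by
    refine (isLD_toReal_measure_Iic (fun x hx => ?_) hmax).congr fun x hx => ?_
    · simpa only [cdfTower_self] using cdfTower_ne_top hw hA hfin le_rfl hx
    · rw [toReal_div_eq_toReal_cdfTower hw hA le_rfl hx, cdfTower_self]
  integrable j hj z hz x hx := by
    rcases le_total z x with hzx | hxz
    · exact (toReal_div_eq_add_integral hw hA hfin hI hwm hj hz hx hzx).1
    · exact (toReal_div_eq_add_integral hw hA hfin hI hwm hj hx hz hxz).1.symm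
  deriv_eq j hj z hz x hx := by
    rcases le_total z x with hzx | hxz
    · exact (toReal_div_eq_add_integral hw hA hfin hI hwm hj hz hx hzx).2
    · rw [(toReal_div_eq_add_integral hw hA hfin hI hwm hj hx hz hxz).2,
        intervalIntegral.integral_symm]
      ring

theorem stmt_6_general (I : Set ℝ) (hI : I.OrdConnected)
    (w : ℕ → ℝ → ℝ) (hw : IsGauge I w)
    (n k : ℕ)
    (μ : Measure ℝ)
    (hμb : ∀ x ∈ I, (∀ y ∈ I, y ≤ x) → μ {x} = 0)
    (hfin : ∀ j ≤ n, ∀ x ∈ I, (∫⁻ t in I, ENNReal.ofReal (pplus w t j n x) ∂μ) ≠ ⊤)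
    (h : ℝ → ℝ)
    (hh : ∀ x ∈ I, h x = (∫⁻ t in I, ENNReal.ofReal (pplus w t 0 n x) ∂μ).toReal) :
    IsGenL I w n h
      (fun j x => (∫⁻ t in I, ENNReal.ofReal (pplus w t j n x) ∂μ).toReal / w j x) ∧
    (∀ j ≤ n,
      (∀ x ∈ I, 0 ≤ (∫⁻ t in I, ENNReal.ofReal (pplus w t j n x) ∂μ).toReal / w j x) ∧
      MonotoneOn
        (fun x => (∫⁻ t in I, ENNReal.ofReal (pplus w t j n x) ∂μ).toReal / w j x) I) ∧
    MemF I w k n h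
      (fun j x => (∫⁻ t in I, ENNReal.ofReal (pplus w t j n x) ∂μ).toReal / w j x) := by
  set A : ℕ → ℝ → ℝ≥0∞ := fun j x => ∫⁻ t in I, ENNReal.ofReal (pplus w t j n x) ∂μ
  have hpos : ∀ j, ∀ x ∈ I, 0 < w j x := fun j => (hw j).1
  have hν : ∀ x ∈ I, μ.restrict I (Iic x) ≠ ⊤ := fun x hx htop => hfin n le_rfl x hx <| by
    rw [lintegral_ofReal_pplus_self, htop, ENNReal.mul_top (ENNReal.ofReal_pos.2 (hpos n x hx)).ne']
  have hA : ∀ j ≤ n, ∀ x ∈ I, A j x = ENNReal.ofReal (w j x) * cdfTower (μ.restrict I) A n j x :=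
    fun j hj x hx => lintegral_pplus_eq_mul_cdfTower hI hw hj hx (hν x hx)
  have hwm : ∀ j, AEMeasurable (w j) (volume.restrict I) := fun j =>
    (aemeasurable_restrict_iff_comap_subtype hI.measurableSet).2 (hw j).2.1.aemeasurable
  have hmax : ∀ x ∈ I, (∀ y ∈ I, y ≤ x) → μ.restrict I {x} = 0 := fun x hx hx_max =>
    nonpos_iff_eq_zero.1 ((Measure.restrict_apply_le I {x}).trans_eq (hμb x hx hx_max))
  have hgen := isGenL_of_eq_mul_cdfTower hI hwm hpos hA hfin hmax hh
  have hmono : ∀ j ≤ n, MonotoneOn (fun x => (A j x).toReal / w j x) I := fun j hj =>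
    monotoneOn_toReal_div hpos hA hfin hj
  exact ⟨hgen, fun j hj => ⟨fun x hx => div_nonneg ENNReal.toReal_nonneg (hpos j x hx).le,
    hmono j hj⟩, hgen, fun j _ hj => hmono j hj⟩

/-- Proposition `H in F`: `H_+^{0:n} ⊆ F_+^{k:n}(I)`; more precisely
`h = h_{0;μ}` is in `L^n` with generalized derivatives `h_{j;μ}/w_j`, all nonnegative and
nondecreasing on `I`. -/
theorem stmt_6 (I : Set ℝ) (hI : I.OrdConnected) (hIne : ∃ p ∈ I, ∃ q ∈ I, p < q)
    (w : ℕ → ℝ → ℝ) (hw : IsGauge I w)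
    (n k : ℕ) (hk : 1 ≤ k) (hkn : k ≤ n + 1)
    (μ : Measure ℝ)
    (hμb : ∀ x ∈ I, (∀ y ∈ I, y ≤ x) → μ {x} = 0)
    (hfin : ∀ j ≤ n, ∀ x ∈ I, (∫⁻ t in I, ENNReal.ofReal (pplus w t j n x) ∂μ) ≠ ⊤)
    (h : ℝ → ℝ)
    (hh : ∀ x ∈ I, h x = (∫⁻ t in I, ENNReal.ofReal (pplus w t 0 n x) ∂μ).toReal) :
    IsGenL I w n h
      (fun j x => (∫⁻ t in I, ENNReal.ofReal (pplus w t j n x) ∂μ).toReal / w j x) ∧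
    (∀ j ≤ n,
      (∀ x ∈ I, 0 ≤ (∫⁻ t in I, ENNReal.ofReal (pplus w t j n x) ∂μ).toReal / w j x) ∧
      MonotoneOn
        (fun x => (∫⁻ t in I, ENNReal.ofReal (pplus w t j n x) ∂μ).toReal / w j x) I) ∧
    MemF I w k n h
      (fun j x => (∫⁻ t in I, ENNReal.ofReal (pplus w t j n x) ∂μ).toReal / w j x) :=
  stmt_6_general I hI w hw n k μ hμb hfin h hh

end
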